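/- Selective data propagation as an instance of well-propagation: Under the hypotheses of the abstract well-propagation theorem, let 𝔇 = {confined, open}, (𝒞, 𝒪) a pair of tagging functions, L̃ ⊆ L a sub-system, and 𝔓(d,ℓ₁,ℓ₂) ⇔ (d = confined → ℓ₁ ∈ L̃ ∧ ℓ₂ ∈ L̃). If the analysis is valid for N and whenever (ℓ₁,⟨v̂₁,…,v̂_r⟩) ∈ κ(ℓ₂) with 𝒪(v̂ᵢ) = confined for some i we have ℓ₁ ∈ L̃ and ℓ₂ ∈ L̃, then no reduct of N sends a message containing a confined value (per 𝒞 on its abstract tree) between nodes not both in L̃. -/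

import Mathlib

inductive CTag where
  | confined
  | open_
deriving DecidableEq

/-!
Selective data propagation is well-propagation for the policy
`𝔓 d ℓ₁ ℓ₂ := d = confined → ℓ₁ ∈ L̃ ∧ ℓ₂ ∈ L̃`. Every reduct is valid by subject reduction,
so communication soundness describes each transmitted value by an abstract value of a message
in `κ`; tag compatibility turns `𝒞` of the value's tree into `𝒪` of that abstract value, to
which the hypothesis on `κ` applies.
-/

theorem Relation.ReflTransGen.invariant {α : Type*} {r : α → α → Prop} {p : α → Prop}
    (hp : ∀ a b, p a → r a b → p b) {a b : α} (hab : Relation.ReflTransGen r a b)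
    (ha : p a) : p b := by
  induction hab with
  | refl => exact ha
  | tail _ hstep ih => exact hp _ _ ih hstep

def CommSound {Sys L V T G : Type*} (Comm : Sys → L → L → List V → Sys → Prop) (tree : V → T)
    (Lang : G → Set T) (κ : L → Set (L × List (Set G))) (Valid : Sys → Prop) : Prop :=
  ∀ N ℓ₁ ℓ₂ (vs : List V) N', Valid N → Comm N ℓ₁ ℓ₂ vs N' →
    ∃ avs : List (Set G), (ℓ₁, avs) ∈ κ ℓ₂ ∧ avs.length = vs.length ∧
      ∀ i (hv : i < vs.length) (ha : i < avs.length),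
        ∃ Gh ∈ avs.get ⟨i, ha⟩, tree (vs.get ⟨i, hv⟩) ∈ Lang Gh

section WellPropagation

variable {Sys L V T G D : Type*} {Comm : Sys → L → L → List V → Sys → Prop} {tree : V → T}
  {Lang : G → Set T} {κ : L → Set (L × List (Set G))} {Valid : Sys → Prop}

theorem CommSound.exists_mem_kappa (hComm : CommSound Comm tree Lang κ Valid) {N N' : Sys}
    {ℓ₁ ℓ₂ : L} {vs : List V} (hN : Valid N) (hc : Comm N ℓ₁ ℓ₂ vs N') {v : V} (hv : v ∈ vs) :
    ∃ avs, (ℓ₁, avs) ∈ κ ℓ₂ ∧ ∃ av ∈ avs, ∃ g ∈ av, tree v ∈ Lang g := by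
  obtain ⟨i, rfl⟩ := List.mem_iff_get.mp hv
  obtain ⟨avs, hmem, hlen, hget⟩ := hComm _ _ _ _ _ hN hc
  have ha : (i : ℕ) < avs.length := by rw [hlen]; exact i.isLt
  exact ⟨avs, hmem, avs.get ⟨i, ha⟩, List.get_mem _ _, hget i i.isLt ha⟩

theorem well_propagation {Step : Sys → Sys → Prop}
    (hSR : ∀ N N', Valid N → Step N N' → Valid N') (hComm : CommSound Comm tree Lang κ Valid)
    (C : T → D) (O : Set G → D) (hTag : ∀ av : Set G, ∀ g ∈ av, ∀ t ∈ Lang g, C t = O av)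
    (P : D → L → L → Prop)
    (hκ : ∀ ℓ₁ ℓ₂ avs, (ℓ₁, avs) ∈ κ ℓ₂ → ∀ av ∈ avs, P (O av) ℓ₁ ℓ₂)
    {N N' N'' : Sys} (hN : Valid N) (hsteps : Relation.ReflTransGen Step N N')
    {ℓ₁ ℓ₂ : L} {vs : List V} (hc : Comm N' ℓ₁ ℓ₂ vs N'') {v : V} (hv : v ∈ vs) :
    P (C (tree v)) ℓ₁ ℓ₂ := by
  obtain ⟨avs, hmem, av, hav, g, hg, htree⟩ :=
    hComm.exists_mem_kappa (hsteps.invariant hSR hN) hc hv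
  rw [hTag av g hg _ htree]
  exact hκ _ _ _ hmem av hav

end WellPropagation

/-- Selective data propagation as an instance of well-propagation: with tags
`{confined, open}`, a sub-system `Lsub` and policy `d = confined → ℓ₁ ∈ Lsub ∧ ℓ₂ ∈ Lsub`,
if the analysis is valid for `N` and every confined abstract value occurring in a
`κ` message travels between nodes of `Lsub`, then no reduct of `N` sends a message
containing a confined value between nodes not both in `Lsub`. -/
theorem selective_data_propagation
    {Sys L V T G : Type*}
    (Step : Sys → Sys → Prop)
    (Comm : Sys → L → L → List V → Sys → Prop)
    (tree : V → T)
    (Lang : G → Set T)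
    (κ : L → Set (L × List (Set G)))
    (Valid : Sys → Prop)
    (hSR : ∀ N N', Valid N → Step N N' → Valid N')
    (hComm : ∀ N ℓ₁ ℓ₂ (vs : List V) N', Valid N → Comm N ℓ₁ ℓ₂ vs N' →
      ∃ avs : List (Set G), (ℓ₁, avs) ∈ κ ℓ₂ ∧ avs.length = vs.length ∧
        ∀ i (hv : i < vs.length) (ha : i < avs.length),
          ∃ Gh ∈ avs.get ⟨i, ha⟩, tree (vs.get ⟨i, hv⟩) ∈ Lang Gh)
    -- tagging pair (𝒞 on trees, 𝒪 on abstract values)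
    (C : T → CTag) (O : Set G → CTag)
    (hTag : ∀ av : Set G, ∀ g ∈ av, ∀ t ∈ Lang g, C t = O av)
    (Lsub : Set L)
    (N : Sys) (hValid : Valid N)
    (hκ : ∀ ℓ₁ ℓ₂ (avs : List (Set G)), (ℓ₁, avs) ∈ κ ℓ₂ →
      (∃ av ∈ avs, O av = CTag.confined) → ℓ₁ ∈ Lsub ∧ ℓ₂ ∈ Lsub) :
    ∀ N', Relation.ReflTransGen Step N N' →
      ∀ ℓ₁ ℓ₂ (vs : List V) N'', Comm N' ℓ₁ ℓ₂ vs N'' →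
        ∀ i (hv : i < vs.length),
          C (tree (vs.get ⟨i, hv⟩)) = CTag.confined → ℓ₁ ∈ Lsub ∧ ℓ₂ ∈ Lsub := by
  intro N' hsteps ℓ₁ ℓ₂ vs N'' hc i hv
  exact well_propagation hSR hComm C O hTag
    (fun d ℓ₁ ℓ₂ => d = CTag.confined → ℓ₁ ∈ Lsub ∧ ℓ₂ ∈ Lsub)
    (fun ℓ₁ ℓ₂ avs hmem av hav hconf => hκ ℓ₁ ℓ₂ avs hmem ⟨av, hav, hconf⟩)
    hValid hsteps hc (List.get_mem vs ⟨i, hv⟩)
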